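/- arXiv:2103.14055 — 5 statements merged into one kernel-verified Lean document; each statement's English description precedes it below -/
import Mathlib

section
/- Define F(g,ℓ,r) for integers g ≥ 0, ℓ ∈ ℤ, r ≥ 1 by: F(g,ℓ,r) = 0 if g < r − 2ℓ − 1; if g ≥ r − 2ℓ − 1 and r = 1, F(g,ℓ,1) = 2^g − 2Σ_{i=0}^{−ℓ−2} C(g,i) + (−ℓ−2)C(g,−ℓ−1) + ℓ·C(g,−ℓ); if g ≥ r − 2ℓ − 1 and r > 1, F(g,ℓ,r) = 2^g − 2Σ_{i=0}^{−ℓ−2} C(g,i) + (−ℓ+r−3)C(g,−ℓ−1) + (ℓ−1)C(g,−ℓ) − Σ_{i=−ℓ+1}^{r−ℓ−2} C(g,i). Then F satisfies the recursion F(g,ℓ,r) = F(g−1,ℓ,max(1,r−1)) + F(g−1,ℓ+1,r+1) for all g ≥ 1 with g ≥ r − 2ℓ − 1. -/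
/-- Integer-indexed binomial coefficient: `C(g,i) = 0` for `i < 0` (and for `i > g`). -/
def iC (g : ℕ) (i : ℤ) : ℤ := if 0 ≤ i then (Nat.choose g i.toNat : ℤ) else 0

lemma iC_neg {g : ℕ} {i : ℤ} (h : i < 0) : iC g i = 0 := by
  simp [iC, not_le.2 h]

lemma iC_ofNat (g n : ℕ) : iC g n = g.choose n := by simp [iC]

lemma iC_pascal (g : ℕ) (i : ℤ) : iC (g + 1) i = iC g (i - 1) + iC g i := by
  rcases lt_trichotomy i 0 with hi | hi | hi
  · rw [iC_neg hi, iC_neg hi, iC_neg (by omega)]; ring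
  · subst hi
    rw [iC_neg (by omega : (0:ℤ) - 1 < 0)]
    simp [iC]
  · obtain ⟨k, rfl⟩ : ∃ k : ℕ, i = (k : ℤ) + 1 := ⟨(i - 1).toNat, by omega⟩
    have h1 : ((k : ℤ) + 1 - 1) = (k : ℤ) := by ring
    rw [h1, iC_ofNat]
    have h2 : ((k : ℤ) + 1) = ((k + 1 : ℕ) : ℤ) := by push_cast; ring
    rw [h2, iC_ofNat, iC_ofNat]
    push_cast [Nat.choose_succ_succ]
    ring

lemma sum_pascal_nat (g n : ℕ) :
    ∑ i ∈ Finset.range n, ((g + 1).choose i : ℤ) =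
      2 * ∑ i ∈ Finset.range n, (g.choose i : ℤ) - iC g ((n : ℤ) - 1) := by
  induction n with
  | zero => rw [iC_neg (by norm_num)]; simp
  | succ n ih =>
    rw [Finset.sum_range_succ, Finset.sum_range_succ, ih]
    have : ((g + 1).choose n : ℤ) = iC (g + 1) n := (iC_ofNat _ _).symm
    rw [this, iC_pascal]
    have h1 : ((n : ℤ) + 1 - 1) = (n : ℤ) := by ring
    push_cast [h1, iC_ofNat]
    ring

lemma sum_pascal (g : ℕ) (a : ℤ) :
    ∑ i ∈ Finset.range a.toNat, ((g + 1).choose i : ℤ) =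
      2 * ∑ i ∈ Finset.range a.toNat, (g.choose i : ℤ) - iC g (a - 1) := by
  rcases le_or_gt a 0 with ha | ha
  · rw [Int.toNat_of_nonpos ha]
    simp [iC_neg (by omega : a - 1 < 0)]
  · obtain ⟨n, rfl⟩ : ∃ n : ℕ, a = (n : ℤ) := ⟨a.toNat, by omega⟩
    simp only [Int.toNat_natCast]
    exact sum_pascal_nat g n

lemma sum_succ (g : ℕ) (a : ℤ) :
    ∑ i ∈ Finset.range a.toNat, (g.choose i : ℤ) =
      ∑ i ∈ Finset.range (a - 1).toNat, (g.choose i : ℤ) + iC g (a - 1) := by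
  rcases le_or_gt a 0 with ha | ha
  · rw [Int.toNat_of_nonpos ha, Int.toNat_of_nonpos (by omega)]
    simp [iC_neg (by omega : a - 1 < 0)]
  · have h1 : a.toNat = (a - 1).toNat + 1 := by omega
    rw [h1, Finset.sum_range_succ]
    rw [iC, if_pos (by omega : (0:ℤ) ≤ a - 1)]

lemma T_pascal (g : ℕ) (a : ℤ) (m : ℕ) :
    ∑ j ∈ Finset.range m, iC (g + 1) (a + j) =
      2 * ∑ j ∈ Finset.range m, iC g (a + j) + iC g (a - 1) - iC g (a + m - 1) := by
  induction m with
  | zero => simp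
  | succ m ih =>
    rw [Finset.sum_range_succ, Finset.sum_range_succ, ih, iC_pascal]
    have h1 : a + ((m : ℤ) + 1) - 1 = a + m := by ring
    push_cast [h1]
    ring

lemma key_half (m : ℕ) :
    (2:ℤ) ^ (2 * m + 1) - 2 * ∑ i ∈ Finset.range m, ((2 * m + 1).choose i : ℤ)
      + ((m : ℤ) - 1) * iC (2 * m + 1) (m : ℤ)
      + (-(m : ℤ) - 1) * iC (2 * m + 1) ((m : ℤ) + 1) = 0 := by
  have h4 : ∑ i ∈ Finset.range (m + 1), ((2 * m + 1).choose i : ℤ) = 4 ^ m := by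
    exact_mod_cast congrArg (Nat.cast : ℕ → ℤ) (Nat.sum_range_choose_halfway m)
  rw [Finset.sum_range_succ] at h4
  have h5 : (2:ℤ) ^ (2 * m + 1) = 2 * 4 ^ m := by
    rw [pow_succ, pow_mul]; norm_num; ring
  rw [show ((m : ℤ) + 1) = ((m + 1 : ℕ) : ℤ) by push_cast; ring, iC_ofNat, iC_ofNat,
    Nat.choose_symm_half]
  linarith

/-- The master formula for the Tevelev degrees `Tev_{g,ℓ,r}` (Theorem 6.1). -/
def F (g : ℕ) (ℓ : ℤ) (r : ℕ) : ℤ :=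
  if (g : ℤ) < (r : ℤ) - 2 * ℓ - 1 then 0
  else if r = 1 then
    2 ^ g - 2 * ∑ i ∈ Finset.range (-ℓ - 1).toNat, (Nat.choose g i : ℤ)
      + (-ℓ - 2) * iC g (-ℓ - 1) + ℓ * iC g (-ℓ)
  else
    2 ^ g - 2 * ∑ i ∈ Finset.range (-ℓ - 1).toNat, (Nat.choose g i : ℤ)
      + (-ℓ + (r : ℤ) - 3) * iC g (-ℓ - 1) + (ℓ - 1) * iC g (-ℓ)
      - ∑ j ∈ Finset.range (r - 2), iC g (-ℓ + 1 + (j : ℤ))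

theorem F_recursion (g : ℕ) (ℓ : ℤ) (r : ℕ) (hg : 1 ≤ g) (hr : 1 ≤ r)
    (h : (r : ℤ) - 2 * ℓ - 1 ≤ (g : ℤ)) :
    F g ℓ r = F (g - 1) ℓ (max 1 (r - 1)) + F (g - 1) (ℓ + 1) (r + 1) := by
  obtain ⟨g', rfl⟩ : ∃ g', g = g' + 1 := ⟨g - 1, by omega⟩
  simp only [Nat.add_sub_cancel]
  by_cases hr1 : r = 1
  · -- case A : r = 1
    subst hr1
    rw [show max 1 (1 - 1) = 1 from rfl]
    have hc1 : ¬ (((g' + 1 : ℕ) : ℤ) < ((1:ℕ):ℤ) - 2 * ℓ - 1) := by push_cast at h ⊢; omega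
    have hc3 : ¬ (((g' : ℕ) : ℤ) < ((2:ℕ):ℤ) - 2 * (ℓ + 1) - 1) := by push_cast at h ⊢; omega
    by_cases hc2 : ((g' : ℕ) : ℤ) < ((1:ℕ):ℤ) - 2 * ℓ - 1
    · -- A1 : boundary, g' = -2ℓ - 1
      obtain ⟨m, rfl⟩ : ∃ m : ℕ, ℓ = -(m : ℤ) - 1 := ⟨(-ℓ - 1).toNat, by push_cast at hc2; omega⟩
      have hg2 : g' = 2 * m + 1 := by push_cast at hc1 hc2; omega
      simp only [F, if_neg hc1, if_pos hc2, if_neg hc3, reduceIte, if_neg (by norm_num : ¬ (2 = 1))]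
      rw [sum_pascal, iC_pascal, iC_pascal, sum_succ]
      simp only [show ((2:ℕ) - 2) = 0 from rfl, Finset.range_zero, Finset.sum_empty]
      subst hg2
      have hk := key_half m
      rw [show (Finset.range m) = Finset.range ((m : ℤ)).toNat from by simp, sum_succ] at hk
      ring_nf
      ring_nf at hk
      linarith
    · -- A2 : generic r = 1
      simp only [F, if_neg hc1, if_neg hc2, if_neg hc3, reduceIte, if_neg (by norm_num : ¬ (2 = 1))]
      rw [sum_pascal, iC_pascal, iC_pascal, sum_succ]
      simp only [show ((2:ℕ) - 2) = 0 from rfl, Finset.range_zero, Finset.sum_empty]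
      ring_nf
  · -- case B : r ≥ 2
    have hr2 : 2 ≤ r := by omega
    rw [show max 1 (r - 1) = r - 1 from by omega]
    have hc1 : ¬ (((g' + 1 : ℕ) : ℤ) < (r : ℤ) - 2 * ℓ - 1) := by push_cast at h ⊢; omega
    have hc2 : ¬ (((g' : ℕ) : ℤ) < ((r - 1 : ℕ) : ℤ) - 2 * ℓ - 1) := by
      push_cast at h ⊢; omega
    have hc3 : ¬ (((g' : ℕ) : ℤ) < ((r + 1 : ℕ) : ℤ) - 2 * (ℓ + 1) - 1) := by
      push_cast at h ⊢; omega
    have hT2 : ∑ j ∈ Finset.range (r + 1 - 2), iC g' (-(ℓ + 1) + 1 + (j : ℤ)) =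
        ∑ j ∈ Finset.range (r - 2), iC g' (-ℓ + 1 + (j : ℤ)) + iC g' (-ℓ) := by
      rw [show r + 1 - 2 = (r - 2) + 1 from by omega, Finset.sum_range_succ']
      congr 1
      · apply Finset.sum_congr rfl; intro j _; congr 1; push_cast; ring
      · congr 1; push_cast; ring
    by_cases hr3 : r = 2
    · -- B1 : r = 2
      subst hr3
      simp only [F, if_neg hc1, if_neg hc2, if_neg hc3, if_pos rfl,
        if_neg (by norm_num : ¬ (2 = 1)), if_neg (by norm_num : ¬ (3 = 1))] at hT2 ⊢
      rw [hT2, sum_pascal, iC_pascal, iC_pascal, sum_succ]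
      simp only [show ((2:ℕ) - 2) = 0 from rfl, Finset.range_zero, Finset.sum_empty]
      push_cast
      ring_nf
    · -- B2 : r ≥ 3
      have hc4 : ¬ (r - 1 = 1) := by omega
      have hT1 : ∑ j ∈ Finset.range (r - 1 - 2), iC g' (-ℓ + 1 + (j : ℤ)) =
          ∑ j ∈ Finset.range (r - 2), iC g' (-ℓ + 1 + (j : ℤ)) - iC g' (-ℓ + 1 + ((r:ℤ) - 3)) := by
        rw [show r - 2 = (r - 1 - 2) + 1 from by omega, Finset.sum_range_succ,
          show ((r - 1 - 2 : ℕ) : ℤ) = (r : ℤ) - 3 from by omega]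
        ring
      simp only [F, if_neg hc1, if_neg hc2, if_neg hc3, if_neg hr1, if_neg hc4,
        if_neg (by omega : ¬ (r + 1 = 1))]
      rw [hT1, hT2, T_pascal, sum_pascal, iC_pascal, iC_pascal, sum_succ,
        show ((r - 2 : ℕ) : ℤ) = (r : ℤ) - 2 from by omega,
        show ((r - 1 : ℕ) : ℤ) = (r : ℤ) - 1 from by omega,
        show ((r + 1 : ℕ) : ℤ) = (r : ℤ) + 1 from by push_cast; ring]
      ring_nf
end

section
/- For ℓ < 0, setting g = −2ℓ and r = 1 in the master formula gives the Catalan number: 2^(2|ℓ|) − 2Σ_{i=0}^{|ℓ|−2} C(2|ℓ|, i) + (|ℓ|−2)C(2|ℓ|, |ℓ|−1) − |ℓ|·C(2|ℓ|, |ℓ|) = C(2|ℓ|, |ℓ|)/(|ℓ|+1). -/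
lemma catalan_aux (m : ℕ) :
    (2 : ℚ) ^ (2 * (m + 1))
      - 2 * ∑ i ∈ Finset.range m, (Nat.choose (2 * (m + 1)) i : ℚ)
      + (((m + 1 : ℕ) : ℚ) - 2) * (Nat.choose (2 * (m + 1)) m : ℚ)
      - ((m + 1 : ℕ) : ℚ) * (Nat.choose (2 * (m + 1)) (m + 1) : ℚ)
    = (Nat.choose (2 * (m + 1)) (m + 1) : ℚ) / (((m + 1 : ℕ) : ℚ) + 1) := by
  -- Full binomial sum
  have hfull : ∑ i ∈ Finset.range (2 * (m + 1) + 1), ((2 * (m + 1)).choose i) =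
      2 ^ (2 * (m + 1)) := Nat.sum_range_choose _
  -- reflection of the upper part
  have hupper : ∑ i ∈ Finset.Ico (m + 2) (2 * (m + 1) + 1), ((2 * (m + 1)).choose i) =
      ∑ i ∈ Finset.range (m + 1), ((2 * (m + 1)).choose i) := by
    rw [Finset.sum_Ico_eq_sum_range]
    have h1 : 2 * (m + 1) + 1 - (m + 2) = m + 1 := by omega
    rw [h1]
    rw [← Finset.sum_range_reflect (fun i => (2 * (m + 1)).choose i) (m + 1)]
    apply Finset.sum_congr rfl
    intro i hi
    simp only [Finset.mem_range] at hi
    rw [show m + 1 - 1 - i = 2 * (m + 1) - (m + 2 + i) from by omega,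
      Nat.choose_symm (by omega)]
  have hsplit : 2 ^ (2 * (m + 1)) =
      2 * ∑ i ∈ Finset.range (m + 1), ((2 * (m + 1)).choose i)
        + (2 * (m + 1)).choose (m + 1) := by
    rw [← hfull]
    rw [← Finset.sum_range_add_sum_Ico _ (show m + 2 ≤ 2 * (m + 1) + 1 by omega)]
    rw [hupper, Finset.sum_range_succ]
    ring
  -- recurrence
  have hrec : ((2 * (m + 1)).choose (m + 1)) * (m + 1) =
      ((2 * (m + 1)).choose m) * (m + 2) := by
    have := Nat.choose_succ_right_eq (2 * (m + 1)) m
    have h2 : 2 * (m + 1) - m = m + 2 := by omega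
    rwa [h2] at this
  -- cast to ℚ
  have hsplitQ : (2 : ℚ) ^ (2 * (m + 1)) =
      2 * (∑ i ∈ Finset.range m, ((2 * (m + 1)).choose i : ℚ)
            + ((2 * (m + 1)).choose m : ℚ))
        + ((2 * (m + 1)).choose (m + 1) : ℚ) := by
    have := congrArg (fun x : ℕ => (x : ℚ)) hsplit
    push_cast [Finset.sum_range_succ] at this
    linarith
  have hrecQ : (((2 * (m + 1)).choose (m + 1) : ℚ)) * ((m : ℚ) + 1) =
      (((2 * (m + 1)).choose m : ℚ)) * ((m : ℚ) + 2) := by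
    exact_mod_cast congrArg (fun x : ℕ => (x : ℚ)) hrec
  have hne : ((m : ℚ) + 1) + 1 ≠ 0 := by positivity
  push_cast
  field_simp
  linear_combination ((m : ℚ) + 2) * hsplitQ - ((m : ℚ) + 1) * hrecQ

theorem catalan_specialization (ℓ : ℤ) (hℓ : ℓ < 0) :
    (2 : ℚ) ^ (2 * (-ℓ).toNat)
      - 2 * ∑ i ∈ Finset.range ((-ℓ).toNat - 1), (Nat.choose (2 * (-ℓ).toNat) i : ℚ)
      + (((-ℓ).toNat : ℚ) - 2) * (Nat.choose (2 * (-ℓ).toNat) ((-ℓ).toNat - 1) : ℚ)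
      - ((-ℓ).toNat : ℚ) * (Nat.choose (2 * (-ℓ).toNat) ((-ℓ).toNat) : ℚ)
    = (Nat.choose (2 * (-ℓ).toNat) ((-ℓ).toNat) : ℚ) / (((-ℓ).toNat : ℚ) + 1) := by
  obtain ⟨m, hm⟩ : ∃ m, (-ℓ).toNat = m + 1 := by
    refine ⟨(-ℓ).toNat - 1, ?_⟩
    omega
  rw [hm]
  simpa using catalan_aux m
end

section
/- For every positive integer m, 2^(2m) = 2Σ_{i=0}^{m−2} C(2m,i) − (m−2)C(2m,m−1) + m·C(2m,m) + C(2m,m)/(m+1). -/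
lemma sum_choose_split (k : ℕ) :
    ∑ i ∈ Finset.range (2*k+3), Nat.choose (2*k+2) i
      = 2 * (∑ i ∈ Finset.range (k+1), Nat.choose (2*k+2) i)
        + Nat.choose (2*k+2) (k+1) := by
  have h : (2*k+3) = (k+2) + (k+1) := by ring
  rw [h, Finset.sum_range_add]
  have h2 : ∀ i ∈ Finset.range (k+1),
      Nat.choose (2*k+2) ((k+2)+i) = Nat.choose (2*k+2) (k-i) := by
    intro i hi
    rw [Finset.mem_range] at hi
    have hle : (k+2)+i ≤ 2*k+2 := by omega
    rw [← Nat.choose_symm hle]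
    congr 1
    omega
  rw [Finset.sum_congr rfl h2]
  have h3 : ∑ i ∈ Finset.range (k+1), Nat.choose (2*k+2) (k-i)
      = ∑ i ∈ Finset.range (k+1), Nat.choose (2*k+2) i := by
    have := Finset.sum_range_reflect (fun j => Nat.choose (2*k+2) j) (k+1)
    simpa using this
  rw [h3, Finset.sum_range_succ]
  ring

theorem binomial_catalan_identity (m : ℕ) (hm : 1 ≤ m) :
    (2 : ℚ) ^ (2 * m)
      = 2 * ∑ i ∈ Finset.range (m - 1), (Nat.choose (2 * m) i : ℚ)
        - ((m : ℚ) - 2) * (Nat.choose (2 * m) (m - 1) : ℚ)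
        + (m : ℚ) * (Nat.choose (2 * m) m : ℚ)
        + (Nat.choose (2 * m) m : ℚ) / ((m : ℚ) + 1) := by
  obtain ⟨k, rfl⟩ : ∃ k, m = k + 1 := ⟨m - 1, by omega⟩
  have h2m : 2 * (k + 1) = 2*k+2 := by ring
  have h1 : ∑ i ∈ Finset.range (2*k+3), Nat.choose (2*k+2) i = 2 ^ (2*k+2) := by
    have := Nat.sum_range_choose (2*k+2)
    simpa using this
  have h2 := sum_choose_split k
  have h3 : Nat.choose (2*k+2) (k+1) * (k+1) = Nat.choose (2*k+2) k * (k+2) := by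
    have := Nat.choose_succ_right_eq (2*k+2) k
    have h' : 2*k+2 - k = k+2 := by omega
    rw [h'] at this
    exact this
  have h4 : ∑ i ∈ Finset.range (k+1), Nat.choose (2*k+2) i
      = (∑ i ∈ Finset.range k, Nat.choose (2*k+2) i) + Nat.choose (2*k+2) k :=
    Finset.sum_range_succ _ _
  rw [h4] at h2
  rw [h2] at h1
  -- cast to ℚ
  have hs : ((k:ℚ)+1) - 1 = (k:ℚ) := by ring
  simp only [h2m, Nat.add_sub_cancel]
  have hq1 : ((2 * ((∑ i ∈ Finset.range k, Nat.choose (2*k+2) i) + Nat.choose (2*k+2) k)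
      + Nat.choose (2*k+2) (k+1) : ℕ) : ℚ) = ((2:ℚ) ^ (2*k+2)) := by
    rw [h1]; push_cast; ring
  push_cast at hq1
  have hq3 : ((Nat.choose (2*k+2) (k+1) : ℚ)) * ((k:ℚ)+1)
      = (Nat.choose (2*k+2) k : ℚ) * ((k:ℚ)+2) := by
    exact_mod_cast congrArg (Nat.cast : ℕ → ℚ) h3
  have hne : ((k:ℚ)+1) + 1 ≠ 0 := by positivity
  push_cast
  field_simp
  ring_nf
  ring_nf at hq1 hq3
  linear_combination (-((k:ℚ)+2)) * hq1 - ((k:ℚ)+1) * hq3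
end

section
/- For every integer m ≥ 2: Σ_{k=2}^{m+1} k·[C(2m−k, m−1) − C(2m−k, m)] = 4(2m−1)(2m+1)·[C(2m−2, m−1) − C(2m−2, m)]/((m+1)(m+2)). -/
open Finset

private lemma shift_sum (a b : ℕ) (f : ℕ → ℚ) :
    ∑ j ∈ Icc a b, f (j + 1) = ∑ j ∈ Icc (a + 1) (b + 1), f j := by
  rw [← Finset.map_add_right_Icc, Finset.sum_map]
  simp [addRightEmbedding]

theorem sum_k_binomial_identity (m : ℕ) (hm : 2 ≤ m) :
    ∑ k ∈ Finset.Icc 2 (m + 1),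
        (k : ℚ) * ((Nat.choose (2 * m - k) (m - 1) : ℚ) - (Nat.choose (2 * m - k) m : ℚ))
      = 4 * (2 * (m : ℚ) - 1) * (2 * (m : ℚ) + 1)
          * ((Nat.choose (2 * m - 2) (m - 1) : ℚ) - (Nat.choose (2 * m - 2) m : ℚ))
          / (((m : ℚ) + 1) * ((m : ℚ) + 2)) := by
  obtain ⟨n, rfl⟩ : ∃ n, m = n + 2 := ⟨m - 2, by omega⟩
  clear hm
  -- reindex with j = 2n+4-k
  have h1 : ∑ k ∈ Finset.Icc 2 (n + 2 + 1),
        (k : ℚ) * ((Nat.choose (2 * (n + 2) - k) (n + 2 - 1) : ℚ)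
            - (Nat.choose (2 * (n + 2) - k) (n + 2) : ℚ))
      = ∑ j ∈ Finset.Icc (n + 1) (2 * n + 2),
        ((2 * n + 4 - j : ℕ) : ℚ)
          * ((Nat.choose j (n + 1) : ℚ) - (Nat.choose j (n + 2) : ℚ)) := by
    refine Finset.sum_nbij' (fun k => 2 * n + 4 - k) (fun j => 2 * n + 4 - j)
      ?_ ?_ ?_ ?_ ?_ <;> intro a ha <;> simp only [Finset.mem_Icc] at * <;> try omega
    have h2 : 2 * (n + 2) - a = 2 * n + 4 - a := by omega
    have h3 : 2 * n + 4 - (2 * n + 4 - a) = a := by omega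
    have h4 : n + 2 - 1 = n + 1 := by omega
    rw [h2, h3, h4]
  rw [h1]
  -- per-term rewrite
  have h2 : ∀ j ∈ Finset.Icc (n + 1) (2 * n + 2),
      ((2 * n + 4 - j : ℕ) : ℚ)
          * ((Nat.choose j (n + 1) : ℚ) - (Nat.choose j (n + 2) : ℚ))
        = (2 * (n : ℚ) + 5) * (Nat.choose j (n + 1) : ℚ)
          - (2 * (n : ℚ) + 5) * (Nat.choose j (n + 2) : ℚ)
          - ((n : ℚ) + 2) * (Nat.choose (j + 1) (n + 2) : ℚ)
          + ((n : ℚ) + 3) * (Nat.choose (j + 1) (n + 3) : ℚ) := by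
    intro j hj
    simp only [Finset.mem_Icc] at hj
    have c1 : (j + 1) * Nat.choose j (n + 1) = Nat.choose (j + 1) (n + 2) * (n + 2) :=
      Nat.add_one_mul_choose_eq j (n + 1)
    have c2 : (j + 1) * Nat.choose j (n + 2) = Nat.choose (j + 1) (n + 3) * (n + 3) :=
      Nat.add_one_mul_choose_eq j (n + 2)
    have c1' : ((j : ℚ) + 1) * (Nat.choose j (n + 1) : ℚ)
        = (Nat.choose (j + 1) (n + 2) : ℚ) * ((n : ℚ) + 2) := by exact_mod_cast c1
    have c2' : ((j : ℚ) + 1) * (Nat.choose j (n + 2) : ℚ)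
        = (Nat.choose (j + 1) (n + 3) : ℚ) * ((n : ℚ) + 3) := by exact_mod_cast c2
    have hcast : ((2 * n + 4 - j : ℕ) : ℚ) = 2 * (n : ℚ) + 4 - (j : ℚ) := by
      have : (2 * n + 4 - j : ℕ) + j = 2 * n + 4 := by omega
      have := congrArg (fun x : ℕ => (x : ℚ)) this
      push_cast at this
      linarith
    rw [hcast]
    linear_combination (-1 : ℚ) * c1' + c2'
  rw [Finset.sum_congr rfl h2]
  -- split the sum
  simp only [Finset.sum_add_distrib, Finset.sum_sub_distrib, ← Finset.mul_sum]
  -- evaluate the four sums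
  have sA : ∑ j ∈ Finset.Icc (n + 1) (2 * n + 2), (Nat.choose j (n + 1) : ℚ)
      = (Nat.choose (2 * n + 3) (n + 2) : ℚ) := by
    have := Nat.sum_Icc_choose (2 * n + 2) (n + 1)
    exact_mod_cast congrArg (fun x : ℕ => (x : ℚ)) this
  have sB : ∑ j ∈ Finset.Icc (n + 1) (2 * n + 2), (Nat.choose j (n + 2) : ℚ)
      = (Nat.choose (2 * n + 3) (n + 3) : ℚ) := by
    rw [show Finset.Icc (n + 1) (2 * n + 2) = insert (n + 1) (Finset.Icc (n + 2) (2 * n + 2)) by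
      ext x; simp only [Finset.mem_Icc, Finset.mem_insert]; omega]
    rw [Finset.sum_insert (by simp [Finset.mem_Icc])]
    have := Nat.sum_Icc_choose (2 * n + 2) (n + 2)
    have h := congrArg (fun x : ℕ => (x : ℚ)) this
    push_cast at h ⊢
    simp [Nat.choose_eq_zero_of_lt (by omega : n + 1 < n + 2)]
    exact_mod_cast this
  have sC : ∑ j ∈ Finset.Icc (n + 1) (2 * n + 2), (Nat.choose (j + 1) (n + 2) : ℚ)
      = (Nat.choose (2 * n + 4) (n + 3) : ℚ) := by
    have hs := shift_sum (n + 1) (2 * n + 2) (fun j => (Nat.choose j (n + 2) : ℚ))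
    rw [hs]
    have := Nat.sum_Icc_choose (2 * n + 3) (n + 2)
    exact_mod_cast congrArg (fun x : ℕ => (x : ℚ)) this
  have sD : ∑ j ∈ Finset.Icc (n + 1) (2 * n + 2), (Nat.choose (j + 1) (n + 3) : ℚ)
      = (Nat.choose (2 * n + 4) (n + 4) : ℚ) := by
    have hs := shift_sum (n + 1) (2 * n + 2) (fun j => (Nat.choose j (n + 3) : ℚ))
    rw [hs]
    rw [show Finset.Icc (n + 2) (2 * n + 3) = insert (n + 2) (Finset.Icc (n + 3) (2 * n + 3)) by
      ext x; simp only [Finset.mem_Icc, Finset.mem_insert]; omega]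
    rw [Finset.sum_insert (by simp [Finset.mem_Icc])]
    have := Nat.sum_Icc_choose (2 * n + 3) (n + 3)
    simp [Nat.choose_eq_zero_of_lt (by omega : n + 2 < n + 3)]
    exact_mod_cast this
  rw [sA, sB, sC, sD]
  -- ratio relations
  have hn2 : ((n : ℚ) + 2) ≠ 0 := by positivity
  have hn3 : ((n : ℚ) + 3) ≠ 0 := by positivity
  have hn4 : ((n : ℚ) + 4) ≠ 0 := by positivity
  have e1 : (Nat.choose (2 * n + 2) (n + 2) : ℚ) * ((n : ℚ) + 2) = (Nat.choose (2 * n + 2) (n + 1) : ℚ) * ((n : ℚ) + 1) := by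
    have h := Nat.choose_succ_right_eq (2 * n + 2) (n + 1)
    rw [show 2 * n + 2 - (n + 1) = n + 1 by omega, show n + 1 + 1 = n + 2 by omega] at h
    exact_mod_cast congrArg (fun x : ℕ => (x : ℚ)) h
  have e2 : (Nat.choose (2 * n + 3) (n + 2) : ℚ)
      = (Nat.choose (2 * n + 2) (n + 1) : ℚ) + (Nat.choose (2 * n + 2) (n + 2) : ℚ) := by
    have h := Nat.choose_succ_succ' (2 * n + 2) (n + 1)
    rw [show 2 * n + 2 + 1 = 2 * n + 3 by omega, show n + 1 + 1 = n + 2 by omega] at h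
    exact_mod_cast congrArg (fun x : ℕ => (x : ℚ)) h
  have e3 : (Nat.choose (2 * n + 3) (n + 3) : ℚ) * ((n : ℚ) + 3)
      = (Nat.choose (2 * n + 3) (n + 2) : ℚ) * ((n : ℚ) + 1) := by
    have h := Nat.choose_succ_right_eq (2 * n + 3) (n + 2)
    rw [show 2 * n + 3 - (n + 2) = n + 1 by omega, show n + 2 + 1 = n + 3 by omega] at h
    exact_mod_cast congrArg (fun x : ℕ => (x : ℚ)) h
  have e4 : (Nat.choose (2 * n + 4) (n + 3) : ℚ)
      = (Nat.choose (2 * n + 3) (n + 2) : ℚ) + (Nat.choose (2 * n + 3) (n + 3) : ℚ) := by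
    have h := Nat.choose_succ_succ' (2 * n + 3) (n + 2)
    rw [show 2 * n + 3 + 1 = 2 * n + 4 by omega, show n + 2 + 1 = n + 3 by omega] at h
    exact_mod_cast congrArg (fun x : ℕ => (x : ℚ)) h
  have e5 : (Nat.choose (2 * n + 3) (n + 4) : ℚ) * ((n : ℚ) + 4)
      = (Nat.choose (2 * n + 3) (n + 3) : ℚ) * (n : ℚ) := by
    have h := Nat.choose_succ_right_eq (2 * n + 3) (n + 3)
    rw [show 2 * n + 3 - (n + 3) = n by omega, show n + 3 + 1 = n + 4 by omega] at h
    exact_mod_cast congrArg (fun x : ℕ => (x : ℚ)) h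
  have e6 : (Nat.choose (2 * n + 4) (n + 4) : ℚ)
      = (Nat.choose (2 * n + 3) (n + 3) : ℚ) + (Nat.choose (2 * n + 3) (n + 4) : ℚ) := by
    have h := Nat.choose_succ_succ' (2 * n + 3) (n + 3)
    rw [show 2 * n + 3 + 1 = 2 * n + 4 by omega, show n + 3 + 1 = n + 4 by omega] at h
    exact_mod_cast congrArg (fun x : ℕ => (x : ℚ)) h
  -- explicit values
  have v1 : (Nat.choose (2 * n + 2) (n + 2) : ℚ) = (Nat.choose (2 * n + 2) (n + 1) : ℚ) * ((n : ℚ) + 1) / ((n : ℚ) + 2) := by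
    field_simp; linarith [e1]
  have v2 : (Nat.choose (2 * n + 3) (n + 2) : ℚ) = (Nat.choose (2 * n + 2) (n + 1) : ℚ) * (2 * (n : ℚ) + 3) / ((n : ℚ) + 2) := by
    rw [e2, v1]; field_simp; ring
  have v3 : (Nat.choose (2 * n + 3) (n + 3) : ℚ)
      = (Nat.choose (2 * n + 2) (n + 1) : ℚ) * (2 * (n : ℚ) + 3) * ((n : ℚ) + 1) / (((n : ℚ) + 2) * ((n : ℚ) + 3)) := by
    rw [v2] at e3; field_simp at e3 ⊢; linarith [e3]
  have v4 : (Nat.choose (2 * n + 4) (n + 3) : ℚ)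
      = (Nat.choose (2 * n + 2) (n + 1) : ℚ) * (2 * (n : ℚ) + 3) * (2 * (n : ℚ) + 4) / (((n : ℚ) + 2) * ((n : ℚ) + 3)) := by
    rw [e4, v2, v3]; field_simp; ring
  have v5 : (Nat.choose (2 * n + 3) (n + 4) : ℚ)
      = (Nat.choose (2 * n + 2) (n + 1) : ℚ) * (2 * (n : ℚ) + 3) * ((n : ℚ) + 1) * (n : ℚ)
        / (((n : ℚ) + 2) * ((n : ℚ) + 3) * ((n : ℚ) + 4)) := by
    rw [v3] at e5; field_simp at e5 ⊢; linarith [e5]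
  have v6 : (Nat.choose (2 * n + 4) (n + 4) : ℚ)
      = (Nat.choose (2 * n + 2) (n + 1) : ℚ) * (2 * (n : ℚ) + 3) * ((n : ℚ) + 1) * (2 * (n : ℚ) + 4)
        / (((n : ℚ) + 2) * ((n : ℚ) + 3) * ((n : ℚ) + 4)) := by
    rw [e6, v3, v5]; field_simp; ring
  rw [show n + 2 - 1 = n + 1 by omega, show 2 * (n + 2) - 2 = 2 * n + 2 by omega]
  rw [v2, v3, v4, v6, v1]
  push_cast
  field_simp
  ring
end

section
/- The vectors E_s, s ≥ 1, given by E_s[j] = 2^(s+j−1) − Σ_{i=0}^{s−2} C(s+j−1, i) for j ≥ 0, are linearly independent over ℚ: for each s ≥ 2, the function j ↦ E_s[j] − 2^(s−1)·2^j is a polynomial in j of degree exactly s−2, hence no nontrivial finite linear combination of the E_s vanishes. -/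
open Polynomial Finset

/-- `E s j = 2^(s+j-1) - ∑_{i=0}^{s-2} C(s+j-1, i)`. -/
def E (s j : ℕ) : ℤ :=
  2 ^ (s + j - 1) - ∑ i ∈ Finset.range (s - 1), (Nat.choose (s + j - 1) i : ℤ)

/-- `qP s i` evaluates at `j` to `C(s+j-1, i)` (for `i ≤ s-1`). -/
noncomputable def qP (s i : ℕ) : Polynomial ℚ :=
  Polynomial.C ((i.factorial : ℚ)⁻¹) *
    ∏ t ∈ Finset.range i, (Polynomial.X + Polynomial.C ((s : ℚ) - 1 - t))

lemma qP_degree (s i : ℕ) : (qP s i).degree = i := by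
  have hm : (∏ t ∈ Finset.range i, (Polynomial.X + Polynomial.C ((s : ℚ) - 1 - t))).Monic :=
    monic_prod_of_monic _ _ fun t _ => monic_X_add_C _
  have hd : (∏ t ∈ Finset.range i, (Polynomial.X + Polynomial.C ((s : ℚ) - 1 - t))).natDegree
      = i := by
    rw [Polynomial.natDegree_prod _ _ (fun t _ => (monic_X_add_C _).ne_zero),
      Finset.sum_congr rfl (fun t _ => natDegree_X_add_C _), Finset.sum_const,
      Finset.card_range, smul_eq_mul, mul_one]
  rw [qP, degree_C_mul (by positivity), Polynomial.degree_eq_natDegree hm.ne_zero, hd]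

lemma qP_eval (s i j : ℕ) (hs : 1 ≤ s) (hi : i ≤ s - 1) :
    (qP s i).eval (j : ℚ) = ((s + j - 1).choose i : ℚ) := by
  have hn : s + j - 1 = (s - 1) + j := by omega
  have hin : i ≤ s + j - 1 := by omega
  have hdesc : ((s + j - 1).descFactorial i : ℚ)
      = ∏ t ∈ Finset.range i, ((j : ℚ) + ((s : ℚ) - 1 - t)) := by
    rw [Nat.descFactorial_eq_prod_range]
    push_cast
    refine Finset.prod_congr rfl fun t ht => ?_
    have ht' : t < i := Finset.mem_range.mp ht
    have : t ≤ s + j - 1 := by omega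
    push_cast [Nat.cast_sub this, Nat.cast_sub (show 1 ≤ s + j by omega)]
    ring
  have hcf : ((s + j - 1).descFactorial i : ℚ) = (i.factorial : ℚ) * ((s + j - 1).choose i : ℚ) := by
    rw [← Nat.cast_mul, Nat.descFactorial_eq_factorial_mul_choose]
  have hfac : (i.factorial : ℚ) ≠ 0 := by positivity
  simp only [qP, eval_mul, eval_C, eval_prod, eval_add, eval_X]
  rw [← hdesc, hcf]
  field_simp

/-- The polynomial such that `E s j = 2^(s-1)·2^j + (pP s).eval j`. -/
noncomputable def pP (s : ℕ) : Polynomial ℚ := -∑ i ∈ Finset.range (s - 1), qP s i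

lemma pP_eval (s j : ℕ) (hs : 1 ≤ s) :
    ((E s j : ℚ)) = 2 ^ (s - 1) * 2 ^ j + (pP s).eval (j : ℚ) := by
  have h2 : (2 : ℚ) ^ (s + j - 1) = 2 ^ (s - 1) * 2 ^ j := by
    rw [← pow_add]; congr 1; omega
  simp only [E, pP, eval_neg, eval_finset_sum]
  push_cast
  rw [h2]
  have : ∀ i ∈ Finset.range (s - 1), (qP s i).eval (j : ℚ) = ((s + j - 1).choose i : ℚ) := by
    intro i hi
    exact qP_eval s i j hs (by have := Finset.mem_range.mp hi; omega)
  rw [Finset.sum_congr rfl this]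
  ring

lemma pP_degree (s : ℕ) (hs : 2 ≤ s) : (pP s).degree = (s - 2 : ℕ) := by
  rw [pP, degree_neg]
  have hr : s - 1 = (s - 2) + 1 := by omega
  rw [hr, Finset.sum_range_succ]
  have hlt : (∑ i ∈ Finset.range (s - 2), qP s i).degree < (qP s (s - 2)).degree := by
    rw [qP_degree]
    refine lt_of_le_of_lt (Polynomial.degree_sum_le _ _) ?_
    rw [Finset.sup_lt_iff (by exact_mod_cast WithBot.bot_lt_coe _)]
    intro i hi
    rw [qP_degree]
    exact_mod_cast Finset.mem_range.mp hi
  rw [degree_add_eq_right_of_degree_lt hlt, qP_degree]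

lemma pP_ne_zero (s : ℕ) (hs : 2 ≤ s) : pP s ≠ 0 := by
  intro h
  have := pP_degree s hs
  rw [h, degree_zero] at this
  exact absurd this (by simp)

lemma pP_one : pP 1 = 0 := by simp [pP]

theorem E_linearly_independent :
    (∀ s : ℕ, 2 ≤ s → ∃ p : Polynomial ℚ, p.degree = (s - 2 : ℕ) ∧
      ∀ j : ℕ, ((E s j : ℚ) - 2 ^ (s - 1) * 2 ^ j) = p.eval (j : ℚ)) ∧
    (∀ N : ℕ, ∀ a : ℕ → ℚ,
      (∀ j : ℕ, ∑ s ∈ Finset.Icc 1 N, a s * (E s j : ℚ) = 0) →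
      ∀ s ∈ Finset.Icc 1 N, a s = 0) := by
  constructor
  · intro s hs
    exact ⟨pP s, pP_degree s hs, fun j => by rw [pP_eval s j (by omega)]; ring⟩
  · intro N a h
    set c : ℚ := ∑ s ∈ Finset.Icc 1 N, a s * 2 ^ (s - 1) with hc
    set Q : Polynomial ℚ := ∑ s ∈ Finset.Icc 1 N, a s • pP s with hQ
    have key : ∀ j : ℕ, c * 2 ^ j + Q.eval (j : ℚ) = 0 := by
      intro j
      have := h j
      rw [Finset.sum_congr rfl (fun s hs => by
        rw [pP_eval s j (Finset.mem_Icc.mp hs).1])] at this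
      simp only [hc, hQ, eval_finset_sum, Finset.sum_mul, eval_smul, smul_eq_mul]
      rw [← Finset.sum_add_distrib]
      rw [← this]
      refine Finset.sum_congr rfl fun s hs => by ring
    -- Step 1: Q = 0
    have hQ0 : Q = 0 := by
      by_contra hne
      have hR : Q.comp (Polynomial.X + Polynomial.C 1) - Polynomial.C 2 * Q = 0 := by
        apply Polynomial.eq_zero_of_infinite_isRoot
        apply Set.Infinite.mono (s := Set.range (fun j : ℕ => (j : ℚ)))
        · rintro x ⟨j, rfl⟩
          have h1 := key (j + 1)
          have h2 := key j
          simp only [Set.mem_setOf_eq, IsRoot, eval_sub, eval_comp, eval_add, eval_X, eval_C, eval_mul]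
          push_cast at h1 ⊢
          rw [pow_succ] at h1
          linear_combination h1 - 2 * h2
        · exact Set.infinite_range_of_injective (fun a b => by exact_mod_cast id)
      have hcomp : Q.comp (Polynomial.X + Polynomial.C 1) = Polynomial.C 2 * Q := by
        linear_combination (norm := ring_nf) hR
      have hXn : (Polynomial.X + Polynomial.C (1 : ℚ)).natDegree = 1 :=
        Polynomial.natDegree_X_add_C 1
      have hdeg : (Q.comp (Polynomial.X + Polynomial.C 1)).natDegree = Q.natDegree := by
        rw [Polynomial.natDegree_comp, hXn, mul_one]
      have hlc := congrArg (fun p => Polynomial.coeff p Q.natDegree) hcomp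
      simp only [← hdeg] at hlc
      rw [Polynomial.coeff_natDegree] at hlc
      have hlc2 : (Q.comp (Polynomial.X + Polynomial.C 1)).leadingCoeff = Q.leadingCoeff := by
        rw [Polynomial.leadingCoeff_comp (by rw [hXn]; exact one_ne_zero),
          Polynomial.leadingCoeff_X_add_C, one_pow, mul_one]
      rw [hlc2, hdeg, Polynomial.coeff_C_mul, Polynomial.coeff_natDegree] at hlc
      have : Q.leadingCoeff = 0 := by linarith
      exact hne (Polynomial.leadingCoeff_eq_zero.mp this)
    -- Step 2: c = 0
    have hc0 : c = 0 := by
      have := key 0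
      rw [hQ0] at this
      simpa using this
    -- Step 3: a s = 0 for s ≥ 2, by downward induction
    have ha2 : ∀ d : ℕ, ∀ s, 2 ≤ s → s ≤ N → N - s = d → a s = 0 := by
      intro d
      induction d using Nat.strong_induction_on with
      | _ d ih =>
        intro s hs2 hsN hd
        have hIH : ∀ s', s < s' → s' ≤ N → a s' = 0 := fun s' h1 h2 =>
          ih (N - s') (by omega) s' (by omega) h2 rfl
        have hcoeff := congrArg (fun p => Polynomial.coeff p (s - 2)) hQ0
        simp only [hQ, Polynomial.finset_sum_coeff, Polynomial.coeff_smul, smul_eq_mul,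
          Polynomial.coeff_zero] at hcoeff
        rw [Finset.sum_eq_single s] at hcoeff
        · have hne : (pP s).coeff (s - 2) ≠ 0 := by
            have : (pP s).coeff (s - 2) = (pP s).leadingCoeff := by
              rw [Polynomial.leadingCoeff, Polynomial.natDegree_eq_of_degree_eq_some
                (pP_degree s hs2)]
            rw [this]
            exact Polynomial.leadingCoeff_ne_zero.mpr (pP_ne_zero s hs2)
          exact (mul_eq_zero.mp hcoeff).resolve_right hne
        · intro s' hs' hne
          rcases Finset.mem_Icc.mp hs' with ⟨h1, h2⟩
          rcases lt_or_gt_of_ne hne with hlt | hgt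
          · rcases Nat.eq_or_lt_of_le h1 with rfl | h1'
            · simp [pP_one]
            · have : (pP s').coeff (s - 2) = 0 := by
                apply Polynomial.coeff_eq_zero_of_degree_lt
                rw [pP_degree s' (by omega)]
                exact_mod_cast (by omega : s' - 2 < s - 2)
              rw [this, mul_zero]
          · rw [hIH s' hgt h2, zero_mul]
        · intro hns
          exact absurd (Finset.mem_Icc.mpr ⟨by omega, hsN⟩) hns
    intro s hs
    rcases Finset.mem_Icc.mp hs with ⟨h1, h2⟩
    rcases Nat.eq_or_lt_of_le h1 with rfl | h1'
    · -- s = 1 : use c = 0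
      have : c = a 1 := by
        rw [hc, ← Finset.sum_subset (Finset.singleton_subset_iff.mpr hs)]
        · simp
        · intro x hx hnx
          rcases Finset.mem_Icc.mp hx with ⟨hx1, hx2⟩
          have hx2' : 2 ≤ x := by simp at hnx; omega
          rw [ha2 (N - x) x hx2' hx2 rfl, zero_mul]
      rw [← this, hc0]
    · exact ha2 (N - s) s h1' h2 rfl
end
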